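/- Derivative formula for RORAC under exposure change: with U(h) = Σ_i h_i μ_i and f(h) as in the standard-formula aggregation (f(h⁰) > 0 at h⁰ = (1,…,1)), the function t ↦ U(h⁰ + t e_i)/f(h⁰ + t e_i) is differentiable at t = 0 with derivative (μ_i − RORAC·A_i)/f(h⁰), where RORAC = U(h⁰)/f(h⁰) and A_i = v_i·(Σ_w ρ_{i,w} v_w)/f(h⁰) is the Euler contribution. -/

import Mathlib

/-!
Along the line `h⁰ + t eᵢ` the income `U` is affine with slope `μ i`, and `f²` is a quadratic
form in `t` whose derivative at `0` is, by symmetry of `ρ`, `2 vᵢ ∑_w ρ i w v w`; hence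
`f' = A` by the chain rule for the square root. The quotient rule written as
`(U / f)' = (U' - (U / f) f') / f` then gives the formula.
-/

open Finset

section QuadraticForm

variable {ι : Type*} [Fintype ι]

theorem hasDerivAt_sum_sum_mul_mul (ρ : ι → ι → ℝ) {g : ℝ → ι → ℝ} {g' : ι → ℝ} {x : ℝ}
    (hg : ∀ j, HasDerivAt (fun t => g t j) (g' j) x) :
    HasDerivAt (fun t => ∑ j, ∑ k, ρ j k * g t j * g t k)
      (∑ j, ∑ k, ρ j k * (g' j * g x k + g x j * g' k)) x :=
  HasDerivAt.fun_sum fun j _ => HasDerivAt.fun_sum fun k _ =>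
    (((hg j).const_mul (ρ j k)).mul (hg k)).congr_deriv (by ring)

theorem sum_sum_mul_add_mul_of_symm {ρ : ι → ι → ℝ} (hsym : ∀ j k, ρ j k = ρ k j)
    (a b : ι → ℝ) :
    ∑ j, ∑ k, ρ j k * (a j * b k + b j * a k) = 2 * ∑ j, ∑ k, ρ j k * a j * b k := by
  have hswap : ∑ j, ∑ k, ρ j k * (b j * a k) = ∑ j, ∑ k, ρ j k * a j * b k := by
    rw [sum_comm]
    exact sum_congr rfl fun j _ => sum_congr rfl fun k _ => by rw [hsym]; ring
  simp only [mul_add, sum_add_distrib, hswap]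
  simp only [mul_assoc]
  ring

theorem sum_sum_mul_single_mul [DecidableEq ι] (ρ : ι → ι → ℝ) (i : ι) (c : ℝ) (b : ι → ℝ) :
    ∑ j, ∑ k, ρ j k * (Pi.single i c : ι → ℝ) j * b k = c * ∑ k, ρ i k * b k := by
  simp [Pi.single_apply, mul_sum, mul_comm, mul_left_comm]

end QuadraticForm

theorem hasDerivAt_add_smul_apply {ι : Type*} (x y : ι → ℝ) (j : ι) (s : ℝ) :
    HasDerivAt (fun t : ℝ => (x + t • y) j) (y j) s := by
  simpa using ((hasDerivAt_id s).mul_const (y j)).const_add (x j)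

theorem HasDerivAt.fun_div_sub_ratio {N D : ℝ → ℝ} {N' D' x : ℝ} (hN : HasDerivAt N N' x)
    (hD : HasDerivAt D D' x) (hx : D x ≠ 0) :
    HasDerivAt (fun t => N t / D t) ((N' - N x / D x * D') / D x) x :=
  (hN.fun_div hD hx).congr_deriv (by field_simp)

theorem stmt_17_general (n : ℕ) (μ v : Fin n → ℝ) (ρ : Fin n → Fin n → ℝ)
    (hsym : ∀ i j, ρ i j = ρ j i)
    (U : (Fin n → ℝ) → ℝ) (hU : ∀ h, U h = ∑ i, h i * μ i)
    (f : (Fin n → ℝ) → ℝ)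
    (hf : ∀ h, f h = Real.sqrt (∑ i, ∑ j, ρ i j * (h i * v i) * (h j * v j)))
    (h0 : Fin n → ℝ) (hh0 : h0 = fun _ => 1) (hfh0 : 0 < f h0)
    (i : Fin n)
    (RORAC : ℝ) (hR : RORAC = U h0 / f h0)
    (A : ℝ) (hA : A = v i * (∑ w, ρ i w * v w) / f h0) :
    HasDerivAt
      (fun t : ℝ => U (h0 + t • (Pi.single i 1 : Fin n → ℝ)) / f (h0 + t • (Pi.single i 1 : Fin n → ℝ)))
      ((μ i - RORAC * A) / f h0) 0 := by
  set e : Fin n → ℝ := Pi.single i 1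
  have hline := hasDerivAt_add_smul_apply h0 e
  have hU' : HasDerivAt (fun t : ℝ => U (h0 + t • e)) (μ i) 0 := by
    simp_rw [hU]
    refine (HasDerivAt.fun_sum fun j _ => (hline j 0).mul_const (μ j)).congr_deriv ?_
    simp [e, Pi.single_apply]
  have he j : e j * v j = (Pi.single i (v i) : Fin n → ℝ) j := by
    by_cases hj : j = i <;> simp [e, hj]
  have hQ : HasDerivAt
      (fun t : ℝ => ∑ j, ∑ k, ρ j k * ((h0 + t • e) j * v j) * ((h0 + t • e) k * v k))
      (2 * (v i * ∑ k, ρ i k * v k)) 0 := by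
    refine (hasDerivAt_sum_sum_mul_mul ρ fun j => (hline j 0).mul_const (v j)).congr_deriv ?_
    simp only [sum_sum_mul_add_mul_of_symm hsym, he, sum_sum_mul_single_mul]
    simp [hh0]
  have hf' : HasDerivAt (fun t : ℝ => f (h0 + t • e)) A 0 := by
    simp_rw [hf]
    refine (hQ.sqrt ?_).congr_deriv ?_ <;> simp only [zero_smul, add_zero, ← hf h0]
    · exact fun hQ0 => by simp [hf, hQ0] at hfh0
    · rw [hA]; field_simp
  rw [hR]
  exact hU'.fun_div_sub_ratio hf' (by simpa using hfh0.ne') |>.congr_deriv (by simp)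

/-- Derivative formula for the overall RORAC under a small exposure change in
sub-portfolio `i`: `d/dt [U/f](h⁰ + t e_i)` at `t = 0` equals
`(μ i − RORAC * A i) / f h⁰`. -/
theorem stmt_17 (n : ℕ) (μ v : Fin n → ℝ) (ρ : Fin n → Fin n → ℝ)
    (hsym : ∀ i j, ρ i j = ρ j i)
    (hpsd : ∀ z : Fin n → ℝ, 0 ≤ ∑ i, ∑ j, ρ i j * z i * z j)
    (U : (Fin n → ℝ) → ℝ) (hU : ∀ h, U h = ∑ i, h i * μ i)
    (f : (Fin n → ℝ) → ℝ)
    (hf : ∀ h, f h = Real.sqrt (∑ i, ∑ j, ρ i j * (h i * v i) * (h j * v j)))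
    (h0 : Fin n → ℝ) (hh0 : h0 = fun _ => 1) (hfh0 : 0 < f h0)
    (i : Fin n)
    (RORAC : ℝ) (hR : RORAC = U h0 / f h0)
    (A : ℝ) (hA : A = v i * (∑ w, ρ i w * v w) / f h0) :
    HasDerivAt
      (fun t : ℝ => U (h0 + t • (Pi.single i 1 : Fin n → ℝ)) / f (h0 + t • (Pi.single i 1 : Fin n → ℝ)))
      ((μ i - RORAC * A) / f h0) 0 :=
  stmt_17_general n μ v ρ hsym U hU f hf h0 hh0 hfh0 i RORAC hR A hA
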